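/- Let (Ω,𝓕,μ) be a measure space and p ∈ [1,∞). For every f ∈ L^p(Ω,𝓕,μ), Var_{p,k}(f) → 0 as k → ∞. -/

import Mathlib

open MeasureTheory ENNReal Filter Topology

variable {Ω : Type*} [MeasurableSpace Ω]

/-- A measurable function taking at most `k` distinct values. -/
def IsSimpleLE (k : ℕ) (g : Ω → ℝ) : Prop :=
  Measurable g ∧ ∃ s : Finset ℝ, s.card ≤ k ∧ ∀ x, g x ∈ s

/-- The set `𝒢_{p,k}` of elements of `L^p` that agree a.e. with a measurable
function taking at most `k` distinct values. -/
def Gpk (p : ℝ≥0∞) (μ : MeasureTheory.Measure Ω) (k : ℕ) : Set (Lp ℝ p μ) :=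
  {f | ∃ g : Ω → ℝ, IsSimpleLE k g ∧ (f : Ω → ℝ) =ᵐ[μ] g}

/-- `var_p(f,A)`: the normalized `p`-variation of `f` on a set `A` of positive finite measure. -/
noncomputable def varP (μ : MeasureTheory.Measure Ω) (p : ℝ) (f : Ω → ℝ) (A : Set Ω) : ℝ :=
  if 0 < μ A ∧ μ A < ⊤ then
    ((μ A).toReal⁻¹ * ∫ z in A ×ˢ A, |f z.1 - f z.2| ^ p ∂(μ.prod μ)) ^ (1 / p)
  else 0

/-- `P` is a finite measurable partition of `A`. -/
def IsPartitionOf (A : Set Ω) (P : Finset (Set Ω)) : Prop :=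
  (∀ B ∈ P, MeasurableSet B) ∧ ((P : Set (Set Ω)).PairwiseDisjoint id) ∧
    ⋃₀ (P : Set (Set Ω)) = A

/-- total `p`-variation of `f` with respect to the collection `P`. -/
noncomputable def varTot (μ : MeasureTheory.Measure Ω) (p : ℝ) (f : Ω → ℝ)
    (P : Finset (Set Ω)) : ℝ :=
  (∑ B ∈ P, varP μ p f B ^ p) ^ (1 / p)

/-- `Var_{p,k}(f,A)`: infimum of the total `p`-variation over measurable partitions of `A`
into at most `k` sets. -/
noncomputable def VarOn (μ : MeasureTheory.Measure Ω) (p : ℝ) (k : ℕ) (f : Ω → ℝ)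
    (A : Set Ω) : ℝ :=
  sInf {v | ∃ P : Finset (Set Ω), IsPartitionOf A P ∧ P.card ≤ k ∧ v = varTot μ p f P}

/-- `Var_{p,k}(f)`: the total `p`-variation, a supremum over finite measure sets. -/
noncomputable def Var (μ : MeasureTheory.Measure Ω) (p : ℝ) (k : ℕ) (f : Ω → ℝ) : ℝ :=
  sSup {v | ∃ A : Set Ω, MeasurableSet A ∧ μ A < ⊤ ∧ v = VarOn μ p k f A}

lemma restrict_prod_le (μ : Measure Ω) {B : Set Ω} (hB : MeasurableSet B) (hfin : μ B ≠ ⊤) :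
    (μ.prod μ).restrict (B ×ˢ B) ≤ (μ.restrict B).prod (μ.restrict B) := by
  haveI : IsFiniteMeasure (μ.restrict B) :=
    ⟨by simpa [Measure.restrict_apply_univ] using hfin.lt_top⟩
  rw [Measure.le_iff]
  intro s hs
  have hBB : MeasurableSet (B ×ˢ B) := hB.prod hB
  have hRHS : (μ.restrict B).prod (μ.restrict B) s
      = ∫⁻ x, B.indicator (fun x => μ (Prod.mk x ⁻¹' s ∩ B)) x ∂μ := by
    rw [Measure.prod_apply hs, lintegral_indicator hB]
    refine lintegral_congr fun x => ?_
    rw [Measure.restrict_apply (measurable_prodMk_left hs)]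
  rw [Measure.restrict_apply hs, hRHS]
  by_cases hF : AEMeasurable (fun x => Measure.map (Prod.mk x) μ) μ
  · have hsm : MeasurableSet (s ∩ B ×ˢ B) := hs.inter hBB
    have hL : (μ.prod μ) (s ∩ B ×ˢ B) = ∫⁻ x, μ (Prod.mk x ⁻¹' (s ∩ B ×ˢ B)) ∂μ := by
      rw [Measure.prod_def, Measure.bind, Measure.join_apply hsm,
        lintegral_map' (Measure.measurable_coe hsm).aemeasurable hF]
      exact lintegral_congr fun x => Measure.map_apply measurable_prodMk_left hsm
    rw [hL]
    refine le_of_eq (lintegral_congr fun x => ?_)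
    by_cases hx : x ∈ B
    · rw [Set.indicator_of_mem hx]
      congr 1
      ext y
      simp [Set.mem_prod, hx, and_comm]
    · have he : Prod.mk x ⁻¹' (s ∩ B ×ˢ B) = ∅ := by
        ext y; simp [Set.mem_prod, hx]
      rw [Set.indicator_of_notMem hx, he, measure_empty]
  · have hz : μ.prod μ = 0 := by
      rw [Measure.prod_def, Measure.bind, Measure.map_of_not_aemeasurable hF, Measure.join_zero]
    simp [hz]

lemma varP_nonneg (μ : Measure Ω) (p : ℝ) (f : Ω → ℝ) (A : Set Ω) : 0 ≤ varP μ p f A := by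
  unfold varP
  split
  · refine Real.rpow_nonneg ?_ _
    have h : 0 ≤ ∫ z in A ×ˢ A, |f z.1 - f z.2| ^ p ∂(μ.prod μ) :=
      integral_nonneg fun z => Real.rpow_nonneg (abs_nonneg _) _
    positivity
  · exact le_refl 0

lemma two_rpow_aux {p : ℝ} (hp : 0 ≤ p) (x y : ℝ) (hx : 0 ≤ x) (hy : 0 ≤ y) :
    (x + y) ^ p ≤ 2 ^ p * (x ^ p + y ^ p) := by
  have h1 : x + y ≤ 2 * max x y := by
    rcases le_total x y with h | h
    · rw [max_eq_right h]; nlinarith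
    · rw [max_eq_left h]; nlinarith
  have h2 : (x + y) ^ p ≤ (2 * max x y) ^ p :=
    Real.rpow_le_rpow (by positivity) h1 hp
  have h3 : (2 * max x y) ^ p = 2 ^ p * (max x y) ^ p :=
    Real.mul_rpow (by norm_num) (le_max_of_le_left hx)
  have h4 : (max x y) ^ p ≤ x ^ p + y ^ p := by
    rcases le_total x y with h | h
    · rw [max_eq_right h]; nlinarith [Real.rpow_nonneg hx p]
    · rw [max_eq_left h]; nlinarith [Real.rpow_nonneg hy p]
  have h5 : (0:ℝ) ≤ 2 ^ p := Real.rpow_nonneg (by norm_num) p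
  calc (x + y) ^ p ≤ 2 ^ p * (max x y) ^ p := by rw [← h3]; exact h2
    _ ≤ 2 ^ p * (x ^ p + y ^ p) := by nlinarith

lemma varP_pow_le (μ : Measure Ω) {p : ℝ} (hp : 1 ≤ p) {f : Ω → ℝ} (g : Ω → ℝ)
    (hf : MemLp f (ENNReal.ofReal p) μ) {B : Set Ω} (hB : MeasurableSet B)
    (hBfin : μ B ≠ ⊤) {c : ℝ} (hc : ∀ x ∈ B, g x = c) :
    varP μ p f B ^ p ≤ 2 ^ (p + 1) * ∫ x in B, |f x - g x| ^ p ∂μ := by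
  have hp0 : 0 < p := lt_of_lt_of_le one_pos hp
  have hpne : p ≠ 0 := hp0.ne'
  have hJeq : ∫ x in B, |f x - g x| ^ p ∂μ = ∫ x in B, |f x - c| ^ p ∂μ :=
    setIntegral_congr_fun hB (fun x hx => by rw [hc x hx])
  set J := ∫ x in B, |f x - c| ^ p ∂μ with hJ
  have hJnonneg : 0 ≤ J := integral_nonneg fun x => Real.rpow_nonneg (abs_nonneg _) _
  rw [hJeq]
  by_cases hμB : 0 < μ B ∧ μ B < ⊤
  swap
  · rw [varP, if_neg hμB, Real.zero_rpow hpne]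
    have h5 : (0:ℝ) ≤ 2 ^ (p+1) := Real.rpow_nonneg (by norm_num) _
    positivity
  rw [varP, if_pos hμB]
  set mB := (μ B).toReal with hmB
  have hmBpos : 0 < mB := ENNReal.toReal_pos hμB.1.ne' hBfin
  haveI : IsFiniteMeasure (μ.restrict B) :=
    ⟨by simpa [Measure.restrict_apply_univ] using hBfin.lt_top⟩
  set ρ := (μ.restrict B).prod (μ.restrict B) with hρ
  have hfre : MemLp f (ENNReal.ofReal p) (μ.restrict B) := hf.restrict B
  have hsub : MemLp (fun x => f x - c) (ENNReal.ofReal p) (μ.restrict B) :=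
    hfre.sub (memLp_const c)
  have hqne : (ENNReal.ofReal p) ≠ 0 := (ENNReal.ofReal_pos.2 hp0).ne'
  have hu : Integrable (fun x => |f x - c| ^ p) (μ.restrict B) := by
    have := hsub.integrable_norm_rpow hqne ENNReal.ofReal_ne_top
    simpa [ENNReal.toReal_ofReal hp0.le, Real.norm_eq_abs] using this
  have hone : Integrable (fun _ : Ω => (1 : ℝ)) (μ.restrict B) := integrable_const 1
  have hu1 : Integrable (fun z : Ω × Ω => |f z.1 - c| ^ p * 1) ρ := hu.mul_prod hone
  have hu2 : Integrable (fun z : Ω × Ω => 1 * |f z.2 - c| ^ p) ρ := hone.mul_prod hu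
  set ψ : Ω × Ω → ℝ :=
    fun z => 2 ^ p * (|f z.1 - c| ^ p * 1) + 2 ^ p * (1 * |f z.2 - c| ^ p) with hψ
  have hψint : Integrable ψ ρ := (hu1.const_mul _).add (hu2.const_mul _)
  set φ : Ω × Ω → ℝ := fun z => |f z.1 - f z.2| ^ p with hφ
  have hφψ : ∀ z, φ z ≤ ψ z := by
    intro z
    have h1 : |f z.1 - f z.2| ≤ |f z.1 - c| + |f z.2 - c| := by
      calc |f z.1 - f z.2| ≤ |f z.1 - c| + |c - f z.2| := abs_sub_le _ _ _
        _ = |f z.1 - c| + |f z.2 - c| := by rw [abs_sub_comm c]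
    have h2 := Real.rpow_le_rpow (abs_nonneg _) h1 hp0.le
    have h3 := two_rpow_aux hp0.le _ _ (abs_nonneg (f z.1 - c)) (abs_nonneg (f z.2 - c))
    simp only [hψ, hφ, mul_one, one_mul]
    calc |f z.1 - f z.2| ^ p ≤ (|f z.1 - c| + |f z.2 - c|) ^ p := h2
      _ ≤ 2 ^ p * (|f z.1 - c| ^ p + |f z.2 - c| ^ p) := h3
      _ = _ := by ring
  have hφm : AEStronglyMeasurable φ ρ := by
    have h1 : AEStronglyMeasurable (fun z : Ω × Ω => f z.1) ρ := hfre.1.comp_fst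
    have h2 : AEStronglyMeasurable (fun z : Ω × Ω => f z.2) ρ := hfre.1.comp_snd
    have hcont : Continuous fun t : ℝ => |t| ^ p :=
      continuous_abs.rpow_const fun x => Or.inr hp0.le
    exact hcont.comp_aestronglyMeasurable (h1.sub h2)
  have hφnonneg : ∀ z, 0 ≤ φ z := fun z => Real.rpow_nonneg (abs_nonneg _) _
  have hφint : Integrable φ ρ := hψint.mono' hφm (ae_of_all _ fun z => by
    rw [Real.norm_eq_abs, abs_of_nonneg (hφnonneg z)]; exact hφψ z)
  have hI1 : ∫ z in B ×ˢ B, φ z ∂(μ.prod μ) ≤ ∫ z, φ z ∂ρ :=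
    integral_mono_measure (restrict_prod_le μ hB hBfin) (ae_of_all _ hφnonneg) hφint
  have hI2 : ∫ z, φ z ∂ρ ≤ ∫ z, ψ z ∂ρ := integral_mono hφint hψint hφψ
  have hm1 : ∫ _x, (1:ℝ) ∂(μ.restrict B) = mB := by
    simp [Measure.restrict_apply_univ, hmB, measureReal_def]
  have hJ' : ∫ x, |f x - c| ^ p ∂(μ.restrict B) = J := rfl
  have hI3 : ∫ z, ψ z ∂ρ = 2 ^ (p + 1) * mB * J := by
    rw [hψ, integral_add (hu1.const_mul _) (hu2.const_mul _), integral_const_mul,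
      integral_const_mul, hρ,
      integral_prod_mul (fun x => |f x - c| ^ p) (fun _ => (1:ℝ)),
      integral_prod_mul (fun _ => (1:ℝ)) (fun x => |f x - c| ^ p), hm1, hJ',
      Real.rpow_add two_pos, Real.rpow_one]
    ring
  have hIle : ∫ z in B ×ˢ B, φ z ∂(μ.prod μ) ≤ 2 ^ (p + 1) * mB * J :=
    le_trans hI1 (hI2.trans hI3.le)
  have hInonneg : 0 ≤ ∫ z in B ×ˢ B, φ z ∂(μ.prod μ) := integral_nonneg hφnonneg
  have ht0 : 0 ≤ mB⁻¹ * ∫ z in B ×ˢ B, φ z ∂(μ.prod μ) := by positivity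
  have key : ((mB⁻¹ * ∫ z in B ×ˢ B, φ z ∂(μ.prod μ)) ^ (1/p)) ^ p
      = mB⁻¹ * ∫ z in B ×ˢ B, φ z ∂(μ.prod μ) := by
    rw [← Real.rpow_mul ht0, one_div, inv_mul_cancel₀ hpne, Real.rpow_one]
  calc ((mB⁻¹ * ∫ z in B ×ˢ B, (fun z : Ω × Ω => |f z.1 - f z.2| ^ p) z ∂(μ.prod μ)) ^ (1/p)) ^ p
      = mB⁻¹ * ∫ z in B ×ˢ B, φ z ∂(μ.prod μ) := key
    _ ≤ mB⁻¹ * (2 ^ (p + 1) * mB * J) := by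
        exact mul_le_mul_of_nonneg_left hIle (by positivity)
    _ = 2 ^ (p + 1) * J := by field_simp

lemma varTot_nonneg (μ : Measure Ω) (p : ℝ) (f : Ω → ℝ) (P : Finset (Set Ω)) :
    0 ≤ varTot μ p f P :=
  Real.rpow_nonneg
    (Finset.sum_nonneg fun B _ => Real.rpow_nonneg (varP_nonneg μ p f B) p) _

lemma VarOn_nonneg (μ : Measure Ω) (p : ℝ) (k : ℕ) (f : Ω → ℝ) (A : Set Ω) :
    0 ≤ VarOn μ p k f A :=
  Real.sInf_nonneg fun _v hv => by
    obtain ⟨P, _, _, rfl⟩ := hv; exact varTot_nonneg μ p f P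

lemma Var_nonneg (μ : Measure Ω) (p : ℝ) (k : ℕ) (f : Ω → ℝ) : 0 ≤ Var μ p k f :=
  Real.sSup_nonneg fun _v hv => by
    obtain ⟨A, _, _, rfl⟩ := hv; exact VarOn_nonneg μ p k f A

theorem Var_tendsto_zero (μ : MeasureTheory.Measure Ω) (p : ℝ) (hp : 1 ≤ p)
    [Fact (1 ≤ ENNReal.ofReal p)] (f : Lp ℝ (ENNReal.ofReal p) μ) :
    Tendsto (fun k : ℕ => Var μ p k (f : Ω → ℝ)) atTop (𝓝 0) := by
  classical
  have hp0 : 0 < p := lt_of_lt_of_le one_pos hp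
  have hpne : p ≠ 0 := hp0.ne'
  have hq_top : (ENNReal.ofReal p) ≠ ⊤ := ENNReal.ofReal_ne_top
  have hqne : (ENNReal.ofReal p) ≠ 0 := (ENNReal.ofReal_pos.2 hp0).ne'
  rw [Metric.tendsto_atTop]
  intro ε hε
  set C : ℝ := 2 ^ ((p + 1) / p) with hC
  have hCpos : 0 < C := Real.rpow_pos_of_pos two_pos _
  set δ : ℝ := (ε / 2) / C with hδ
  have hδpos : 0 < δ := by positivity
  obtain ⟨g, hg, hgmem⟩ := (Lp.memLp f).exists_simpleFunc_eLpNorm_sub_lt hq_top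
      (ε := ENNReal.ofReal δ) (ENNReal.ofReal_pos.2 hδpos).ne'
  set D : ℝ := ∫ x, |(f : Ω → ℝ) x - g x| ^ p ∂μ with hD
  have hsub : MemLp ((f : Ω → ℝ) - ⇑g) (ENNReal.ofReal p) μ := (Lp.memLp f).sub hgmem
  have hDint : Integrable (fun x => |(f : Ω → ℝ) x - g x| ^ p) μ := by
    have := hsub.integrable_norm_rpow hqne hq_top
    simpa [ENNReal.toReal_ofReal hp0.le, Real.norm_eq_abs] using this
  have hDnonneg : 0 ≤ D := integral_nonneg fun x => Real.rpow_nonneg (abs_nonneg _) _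
  have hD_le : D ≤ δ ^ p := by
    have h1 : eLpNorm ((f : Ω → ℝ) - ⇑g) (ENNReal.ofReal p) μ
        = ENNReal.ofReal (D ^ p⁻¹) := by
      rw [hsub.eLpNorm_eq_integral_rpow_norm hqne hq_top]
      congr 2
      · rw [ENNReal.toReal_ofReal hp0.le, hD]
        exact integral_congr_ae (ae_of_all _ fun x => by
          simp [Real.norm_eq_abs, ENNReal.toReal_ofReal hp0.le])
      · rw [ENNReal.toReal_ofReal hp0.le]
    rw [h1] at hg
    have h2 : D ^ p⁻¹ < δ := (ENNReal.ofReal_lt_ofReal_iff hδpos).1 hg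
    have h3 : (D ^ p⁻¹) ^ p ≤ δ ^ p :=
      Real.rpow_le_rpow (Real.rpow_nonneg hDnonneg _) h2.le hp0.le
    calc D = (D ^ p⁻¹) ^ p := by
          rw [← Real.rpow_mul hDnonneg, inv_mul_cancel₀ hpne, Real.rpow_one]
      _ ≤ δ ^ p := h3
  have hbound : (2 ^ (p + 1) * D) ^ (1 / p) ≤ ε / 2 := by
    have h2p : (0:ℝ) ≤ 2 ^ (p + 1) := (Real.rpow_pos_of_pos two_pos _).le
    have h1 : (2 ^ (p + 1) * D) ^ (1 / p) ≤ (2 ^ (p + 1) * δ ^ p) ^ (1 / p) := by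
      apply Real.rpow_le_rpow (by positivity) ?_ (by positivity)
      exact mul_le_mul_of_nonneg_left hD_le h2p
    have h2 : (2 ^ (p + 1) * δ ^ p : ℝ) ^ (1 / p) = C * δ := by
      rw [Real.mul_rpow h2p (Real.rpow_nonneg hδpos.le _),
        ← Real.rpow_mul (by norm_num : (0:ℝ) ≤ 2),
        ← Real.rpow_mul hδpos.le, mul_one_div, mul_one_div, div_self hpne,
        Real.rpow_one, hC]
    have h3 : C * δ = ε / 2 := by
      rw [hδ]; field_simp
    calc (2 ^ (p + 1) * D) ^ (1 / p) ≤ (2 ^ (p + 1) * δ ^ p) ^ (1 / p) := h1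
      _ = C * δ := h2
      _ = ε / 2 := h3
  refine ⟨g.range.card, fun k hk => ?_⟩
  have hVar_le : Var μ p k (f : Ω → ℝ) ≤ ε / 2 := by
    refine Real.sSup_le (fun v hv => ?_) (by positivity)
    obtain ⟨A, hA, hAfin, rfl⟩ := hv
    set P : Finset (Set Ω) := g.range.image (fun c => A ∩ ⇑g ⁻¹' {c}) with hP
    have hmeasP : ∀ B ∈ P, MeasurableSet B := by
      intro B hB
      obtain ⟨c, _, rfl⟩ := Finset.mem_image.1 hB
      exact hA.inter (g.measurable (measurableSet_singleton c))
    have hdisj : (P : Set (Set Ω)).PairwiseDisjoint id := by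
      intro B₁ h₁ B₂ h₂ hne
      obtain ⟨c₁, _, rfl⟩ := Finset.mem_image.1 (Finset.mem_coe.1 h₁)
      obtain ⟨c₂, _, rfl⟩ := Finset.mem_image.1 (Finset.mem_coe.1 h₂)
      have hcne : c₁ ≠ c₂ := fun h => hne (by rw [h])
      refine Set.disjoint_left.2 fun x hx₁ hx₂ => ?_
      exact hcne ((hx₁.2 : g x = c₁).symm.trans (hx₂.2 : g x = c₂))
    have hunion : ⋃₀ (P : Set (Set Ω)) = A := by
      apply Set.eq_of_subset_of_subset
      · rintro x ⟨B, hB, hx⟩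
        obtain ⟨c, _, rfl⟩ := Finset.mem_image.1 (Finset.mem_coe.1 hB)
        exact hx.1
      · intro x hx
        exact ⟨A ∩ ⇑g ⁻¹' {g x},
          Finset.mem_coe.2 (Finset.mem_image_of_mem _ (g.mem_range_self x)), hx, rfl⟩
    have hpart : IsPartitionOf A P := ⟨hmeasP, hdisj, hunion⟩
    have hcard : P.card ≤ k := le_trans Finset.card_image_le hk
    have hsum : ∑ B ∈ P, varP μ p (f : Ω → ℝ) B ^ p ≤ 2 ^ (p + 1) * D := by
      have step1 : ∑ B ∈ P, varP μ p (f : Ω → ℝ) B ^ p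
          ≤ ∑ B ∈ P, 2 ^ (p + 1) * ∫ x in B, |(f : Ω → ℝ) x - g x| ^ p ∂μ := by
        refine Finset.sum_le_sum fun B hB => ?_
        obtain ⟨c, _, rfl⟩ := Finset.mem_image.1 hB
        refine varP_pow_le μ hp ⇑g (Lp.memLp f)
          (hA.inter (g.measurable (measurableSet_singleton c)))
          (lt_of_le_of_lt (measure_mono Set.inter_subset_left) hAfin).ne
          (fun x hx => hx.2)
      have step2 : ∑ B ∈ P, ∫ x in B, |(f : Ω → ℝ) x - g x| ^ p ∂μ
          = ∫ x in A, |(f : Ω → ℝ) x - g x| ^ p ∂μ := by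
        have hU : ⋃ B ∈ P, B = A := by
          simpa [Set.sUnion_eq_biUnion] using hunion
        rw [← integral_biUnion_finset P hmeasP hdisj
          (fun B _ => hDint.integrableOn), hU]
      have step3 : ∫ x in A, |(f : Ω → ℝ) x - g x| ^ p ∂μ ≤ D :=
        setIntegral_le_integral hDint
          (ae_of_all _ fun x => Real.rpow_nonneg (abs_nonneg _) _)
      calc ∑ B ∈ P, varP μ p (f : Ω → ℝ) B ^ p
          ≤ ∑ B ∈ P, 2 ^ (p + 1) * ∫ x in B, |(f : Ω → ℝ) x - g x| ^ p ∂μ := step1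
        _ = 2 ^ (p + 1) * ∑ B ∈ P, ∫ x in B, |(f : Ω → ℝ) x - g x| ^ p ∂μ := by
            rw [Finset.mul_sum]
        _ = 2 ^ (p + 1) * ∫ x in A, |(f : Ω → ℝ) x - g x| ^ p ∂μ := by rw [step2]
        _ ≤ 2 ^ (p + 1) * D := by
            have h2p : (0:ℝ) ≤ 2 ^ (p + 1) := (Real.rpow_pos_of_pos two_pos _).le
            exact mul_le_mul_of_nonneg_left step3 h2p
    have hvt : varTot μ p (f : Ω → ℝ) P ≤ ε / 2 := by
      have h1 : varTot μ p (f : Ω → ℝ) P ≤ (2 ^ (p + 1) * D) ^ (1 / p) :=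
        Real.rpow_le_rpow
          (Finset.sum_nonneg fun B _ =>
            Real.rpow_nonneg (varP_nonneg μ p (f : Ω → ℝ) B) p) hsum (by positivity)
      exact h1.trans hbound
    refine le_trans (csInf_le_of_le ?_ ?_ hvt) le_rfl
    · exact ⟨0, fun x hx => by
        obtain ⟨Q, _, _, rfl⟩ := hx; exact varTot_nonneg μ p (f : Ω → ℝ) Q⟩
    · exact ⟨P, hpart, hcard, rfl⟩
  have h0 : 0 ≤ Var μ p k (f : Ω → ℝ) := Var_nonneg μ p k _
  rw [Real.dist_eq, sub_zero, abs_of_nonneg h0]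
  linarith
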